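/- Let X be a finite-dimensional real vector space and q an asymmetric norm on X. If q is 1-bounded, then the closed unit ball B_1^q[0] is strongly compact, and consequently X with the topology τ_q is strongly locally compact. -/

import Mathlib

open Pointwise Set

/-- An asymmetric norm on a real vector space `X`. -/
structure IsAsymmetricNorm {X : Type*} [AddCommGroup X] [Module ℝ X] (q : X → ℝ) : Prop where
  nonneg : ∀ x, 0 ≤ q x
  smul_eq : ∀ a : ℝ, 0 ≤ a → ∀ x, q (a • x) = a * q x
  add_le : ∀ x y, q (x + y) ≤ q x + q y
  eq_zero : ∀ x, q x = 0 → q (-x) = 0 → x = 0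

/-- The topology `τ_q` generated by the open balls of `q`. -/
def asymTop {X : Type*} [AddCommGroup X] [Module ℝ X] (q : X → ℝ) : TopologicalSpace X :=
  TopologicalSpace.generateFrom {U | ∃ x : X, ∃ ε : ℝ, 0 < ε ∧ U = {y | q (y - x) < ε}}

/-- The symmetrization `q^s` of `q`. -/
def symNorm {X : Type*} [AddCommGroup X] (q : X → ℝ) (x : X) : ℝ := max (q x) (q (-x))

/-- The cone `θ_q = {x : q x = 0}`. -/
def theta {X : Type*} [AddCommGroup X] (q : X → ℝ) : Set X := {x | q x = 0}

/-- The closed ball `B_r^q[x] = {y : q (y - x) ≤ r}`. -/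
def closedBallA {X : Type*} [AddCommGroup X] (q : X → ℝ) (x : X) (r : ℝ) : Set X :=
  {y | q (y - x) ≤ r}

/-- A set `K` is strongly compact (w.r.t. the asymmetric norm `q`) if there is a set `S`,
compact in the topology of the norm `q^s`, with `S ⊆ K ⊆ S + θ_q`. -/
def StronglyCompact {X : Type*} [AddCommGroup X] [Module ℝ X] (q : X → ℝ) (K : Set X) : Prop :=
  ∃ S : Set X, @IsCompact X (asymTop (symNorm q)) S ∧ S ⊆ K ∧ K ⊆ S + theta q

/-- `q` is right bounded if `r • B_1^q[0] ⊆ B_1^{q^s}[0] + θ_q` for some `r > 0`. -/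
def RightBounded {X : Type*} [AddCommGroup X] [Module ℝ X] (q : X → ℝ) : Prop :=
  ∃ r : ℝ, 0 < r ∧ r • closedBallA q 0 1 ⊆ closedBallA (symNorm q) 0 1 + theta q

/-- `q` is 1-bounded if `B_1^q[0] ⊆ B_1^{q^s}[0] + θ_q`. -/
def OneBounded {X : Type*} [AddCommGroup X] [Module ℝ X] (q : X → ℝ) : Prop :=
  closedBallA q 0 1 ⊆ closedBallA (symNorm q) 0 1 + theta q

/-- Two asymmetric norms are equivalent if `κ·q ≤ p ≤ l·q` for some `κ, l > 0`. -/
def EquivNorms {X : Type*} [AddCommGroup X] (p q : X → ℝ) : Prop :=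
  ∃ κ l : ℝ, 0 < κ ∧ 0 < l ∧ ∀ x, κ * q x ≤ p x ∧ p x ≤ l * q x

/-- `X` is strongly locally compact (w.r.t. `τ_q`) if every point has a local base of
strongly compact sets. -/
def StronglyLocallyCompact {X : Type*} [AddCommGroup X] [Module ℝ X] (q : X → ℝ) : Prop :=
  ∀ x : X, ∀ U ∈ @nhds X (asymTop q) x,
    ∃ K : Set X, StronglyCompact q K ∧ K ∈ @nhds X (asymTop q) x ∧ K ⊆ U

/-!
The closed `q^s`-ball `B_r^{q^s}[x]` lies inside `B_r^q[x]` because `q ≤ q^s`, and scaling the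
1-boundedness inclusion by `r > 0` gives `B_r^q[x] ⊆ B_r^{q^s}[x] + θ_q`. In finite dimension the
closed balls of the norm `q^s` are compact, so every closed ball `B_r^q[x]` is strongly compact;
since these balls form a neighbourhood base of `τ_q`, the space is strongly locally compact.
-/

open TopologicalSpace

section

variable {X : Type*} [AddCommGroup X] {q : X → ℝ}

lemma le_symNorm (q : X → ℝ) (x : X) : q x ≤ symNorm q x := le_max_left _ _

lemma symNorm_neg (q : X → ℝ) (x : X) : symNorm q (-x) = symNorm q x := by
  simp [symNorm, max_comm]

def ballA (q : X → ℝ) (x : X) (r : ℝ) : Set X := {y | q (y - x) < r}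

lemma ballA_mono {x : X} {r s : ℝ} (hrs : r ≤ s) : ballA q x r ⊆ ballA q x s :=
  fun _ hy => lt_of_lt_of_le hy hrs

variable [Module ℝ X]

namespace IsAsymmetricNorm

lemma map_zero (hq : IsAsymmetricNorm q) : q 0 = 0 := by
  simpa using hq.smul_eq 0 le_rfl 0

protected lemma symNorm (hq : IsAsymmetricNorm q) : IsAsymmetricNorm (symNorm q) where
  nonneg x := (hq.nonneg x).trans (le_symNorm q x)
  smul_eq a ha x := by
    simp only [symNorm, ← smul_neg, hq.smul_eq a ha, mul_max_of_nonneg _ _ ha]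
  add_le x y := by
    refine max_le ((hq.add_le x y).trans (add_le_add (le_max_left _ _) (le_max_left _ _))) ?_
    rw [neg_add]
    exact (hq.add_le _ _).trans (add_le_add (le_max_right _ _) (le_max_right _ _))
  eq_zero x h _ :=
    hq.eq_zero x (le_antisymm (h ▸ le_max_left _ _) (hq.nonneg x))
      (le_antisymm (h ▸ le_max_right _ _) (hq.nonneg _))

lemma symNorm_smul (hq : IsAsymmetricNorm q) (a : ℝ) (x : X) :
    symNorm q (a • x) = |a| * symNorm q x := by
  rcases le_total 0 a with ha | ha
  · rw [hq.symNorm.smul_eq a ha, abs_of_nonneg ha]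
  · rw [← neg_smul_neg, hq.symNorm.smul_eq _ (neg_nonneg.2 ha), symNorm_neg, abs_of_nonpos ha]

noncomputable def symAddGroupNorm (hq : IsAsymmetricNorm q) : AddGroupNorm X where
  toFun := symNorm q
  map_zero' := hq.symNorm.map_zero
  add_le' := hq.symNorm.add_le
  neg' := symNorm_neg q
  eq_zero_of_map_eq_zero' x h := hq.symNorm.eq_zero x h (by rw [symNorm_neg, h])

end IsAsymmetricNorm

lemma mem_ballA_self (hq : IsAsymmetricNorm q) (x : X) {r : ℝ} (hr : 0 < r) :
    x ∈ ballA q x r := by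
  simpa [ballA, hq.map_zero] using hr

lemma ballA_subset_ballA (hq : IsAsymmetricNorm q) (c x : X) (r : ℝ) :
    ballA q x (r - q (x - c)) ⊆ ballA q c r := fun y (hy : q (y - x) < r - q (x - c)) => by
  have htri := hq.add_le (y - x) (x - c)
  rw [sub_add_sub_cancel] at htri
  show q (y - c) < r
  linarith

lemma isTopologicalBasis_ballA (hq : IsAsymmetricNorm q) :
    @IsTopologicalBasis X (asymTop q) {U | ∃ x r, 0 < r ∧ U = ballA q x r} := by
  let := asymTop q
  refine ⟨?_, sUnion_eq_univ_iff.2 fun x =>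
    ⟨_, ⟨x, 1, one_pos, rfl⟩, mem_ballA_self hq x one_pos⟩, rfl⟩
  · rintro _ ⟨c₁, r₁, -, rfl⟩ _ ⟨c₂, r₂, -, rfl⟩ x ⟨hx₁, hx₂⟩
    have hpos : 0 < min (r₁ - q (x - c₁)) (r₂ - q (x - c₂)) :=
      lt_min (sub_pos.2 hx₁) (sub_pos.2 hx₂)
    refine ⟨_, ⟨x, _, hpos, rfl⟩, mem_ballA_self hq x hpos, subset_inter ?_ ?_⟩
    · exact (ballA_mono (min_le_left _ _)).trans (ballA_subset_ballA hq c₁ x r₁)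
    · exact (ballA_mono (min_le_right _ _)).trans (ballA_subset_ballA hq c₂ x r₂)

lemma hasBasis_nhds_ballA (hq : IsAsymmetricNorm q) (x : X) :
    (@nhds X (asymTop q) x).HasBasis (0 < ·) (ballA q x) := by
  let := asymTop q
  refine (isTopologicalBasis_ballA hq).nhds_hasBasis.to_hasBasis ?_ ?_
  · rintro _ ⟨⟨c, r, -, rfl⟩, hx⟩
    exact ⟨_, sub_pos.2 hx, ballA_subset_ballA hq c x r⟩
  · exact fun r hr => ⟨_, ⟨⟨x, r, hr, rfl⟩, mem_ballA_self hq x hr⟩, subset_rfl⟩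

lemma hasBasis_nhds_closedBallA (hq : IsAsymmetricNorm q) (x : X) :
    (@nhds X (asymTop q) x).HasBasis (0 < ·) (closedBallA q x) :=
  (hasBasis_nhds_ballA hq x).to_hasBasis
    (fun r hr => ⟨r / 2, half_pos hr,
      fun _ (hy : q _ ≤ r / 2) => hy.trans_lt (half_lt_self hr)⟩)
    (fun r hr => ⟨r, hr, fun _ (hy : q _ < r) => hy.le⟩)

lemma isCompact_closedBallA_symNorm [FiniteDimensional ℝ X] (hq : IsAsymmetricNorm q) (x : X)
    (r : ℝ) : @IsCompact X (asymTop (symNorm q)) (closedBallA (symNorm q) x r) := by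
  let : NormedAddCommGroup X := hq.symAddGroupNorm.toNormedAddCommGroup
  let : NormedSpace ℝ X := ⟨fun a y => (hq.symNorm_smul a y).le⟩
  have htop : asymTop (symNorm q) = (inferInstance : TopologicalSpace X) := ext_nhds fun y =>
    (hasBasis_nhds_ballA hq.symNorm y).eq_of_same_basis (NormedAddCommGroup.nhds_basis_norm_lt y)
  have hcpt := isCompact_closedBall x r
  simp only [Metric.closedBall, dist_eq_norm] at hcpt
  rwa [htop]

lemma OneBounded.closedBallA_subset (hq : IsAsymmetricNorm q) (h1 : OneBounded q) (x : X)
    {r : ℝ} (hr : 0 < r) : closedBallA q x r ⊆ closedBallA (symNorm q) x r + theta q := by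
  intro y (hy : q (y - x) ≤ r)
  have hz : r⁻¹ • (y - x) ∈ closedBallA q 0 1 := by
    simp only [closedBallA, mem_ofPred_eq, sub_zero, hq.smul_eq _ (inv_nonneg.2 hr.le)]
    exact (inv_mul_le_one₀ hr).2 hy
  obtain ⟨s, hs, t, ht, hst⟩ := h1 hz
  refine ⟨x + r • s, ?_, r • t, ?_, ?_⟩
  · show symNorm q (x + r • s - x) ≤ r
    rw [add_sub_cancel_left, hq.symNorm.smul_eq r hr.le]
    exact mul_le_of_le_one_right hr.le (by simpa [closedBallA] using hs)
  · show q (r • t) = 0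
    rw [hq.smul_eq r hr.le, ht, mul_zero]
  · change s + t = _ at hst
    show x + r • s + r • t = y
    rw [add_assoc, ← smul_add, hst, smul_inv_smul₀ hr.ne', add_sub_cancel]

lemma stronglyCompact_closedBallA [FiniteDimensional ℝ X] (hq : IsAsymmetricNorm q)
    (h1 : OneBounded q) (x : X) {r : ℝ} (hr : 0 < r) : StronglyCompact q (closedBallA q x r) :=
  ⟨closedBallA (symNorm q) x r, isCompact_closedBallA_symNorm hq x r,
    fun _ hy => (le_symNorm q _).trans hy, h1.closedBallA_subset hq x hr⟩

end

theorem statement11 {X : Type*} [AddCommGroup X] [Module ℝ X] [FiniteDimensional ℝ X]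
    (q : X → ℝ) (hq : IsAsymmetricNorm q) (h1 : OneBounded q) :
    StronglyCompact q (closedBallA q 0 1) ∧ StronglyLocallyCompact q := by
  refine ⟨stronglyCompact_closedBallA hq h1 0 one_pos, fun x U hU => ?_⟩
  obtain ⟨r, hr, hrU⟩ := (hasBasis_nhds_closedBallA hq x).mem_iff.1 hU
  exact ⟨closedBallA q x r, stronglyCompact_closedBallA hq h1 x hr,
    (hasBasis_nhds_closedBallA hq x).mem_of_mem hr, hrU⟩
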